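/- Convergence of the QNMF ADMM iteration for robust PCA (Theorem 3.4): let Y be an m×n quaternion matrix, ρ > 0, λ > 0, α > 0, β⁰ > 0, μ > 1, and set β^{(k)} = μ^k·β⁰. Suppose (X^{(k)}), (Z^{(k)}), (η^{(k)}) are sequences of m×n quaternion matrices such that for every k: (i) Z^{(k+1)} is the entrywise quaternion soft-threshold with threshold ρ/β^{(k)} of W^{(k)} = Y − X^{(k)} + η^{(k)}/β^{(k)}, i.e. Z^{(k+1)}_{ij} = (W^{(k)}_{ij}/|W^{(k)}_{ij}|)·max(|W^{(k)}_{ij}| − ρ/β^{(k)}, 0) when W^{(k)}_{ij} ≠ 0 and Z^{(k+1)}_{ij} = 0 otherwise; (ii) there exist unitary quaternion matrices U^{(k)}, V^{(k)} and σ^{(k)} ∈ ℝ^M (M = min(m,n)) with σ^{(k)}₁ ≥ … ≥ σ^{(k)}_M ≥ 0 such that Y − Z^{(k+1)} + η^{(k)}/β^{(k)} = U^{(k)} * D(σ^{(k)}) * (V^{(k)})ᴴ and X^{(k+1)} = U^{(k)} * D(S_{λ/β^{(k)},α}(σ^{(k)})) * (V^{(k)})ᴴ; (iii) η^{(k+1)}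 = η^{(k)} + β^{(k)}·(Y − X^{(k+1)} − Z^{(k+1)}). Then ‖X^{(k+1)} − X^{(k)}‖_F → 0, ‖Z^{(k+1)} − Z^{(k)}‖_F → 0, and ‖Y − X^{(k+1)} − Z^{(k+1)}‖_F → 0 as k → ∞. -/

import Mathlib

open Matrix BigOperators Filter

noncomputable section

abbrev Quat := Quaternion ℝ

def IsQUnitary {k : ℕ} (U : Matrix (Fin k) (Fin k) Quat) : Prop :=
  Uᴴ * U = 1 ∧ U * Uᴴ = 1

def Dmat {m n : ℕ} (s : Fin (min m n) → ℝ) : Matrix (Fin m) (Fin n) Quat :=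
  fun i j =>
    if h : (i : ℕ) = (j : ℕ) then
      ((s ⟨(i : ℕ), by have h1 := i.isLt; have h2 := j.isLt; omega⟩ : ℝ) : Quat)
    else 0

def frob {m n : ℕ} (A : Matrix (Fin m) (Fin n) Quat) : ℝ :=
  Real.sqrt (∑ i, ∑ j, ‖A i j‖ ^ 2)

def Sshrink {M : ℕ} (lam alph : ℝ) (σ : Fin M → ℝ) : Fin M → ℝ :=
  let z : Fin M → ℝ := fun i => if lam < σ i then σ i - lam / 2 else 0
  let nz : ℝ := Real.sqrt (∑ i, z i ^ 2)
  if nz = 0 then fun _ => 0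
  else
    let K : ℝ := 1 + alph * lam / (2 * nz)
    fun i =>
      if K * lam / (2 * (K - 1)) < σ i then σ i
      else if lam < σ i then K * (σ i - lam / 2)
      else 0

open Classical in
def softQ (t : ℝ) (q : Quat) : Quat :=
  if q = 0 then 0 else (max (‖q‖ - t) 0 / ‖q‖) • q

def qinner {m n : ℕ} (P Q : Matrix (Fin m) (Fin n) Quat) : ℝ :=
  ∑ i, ∑ j, (star (P i j) * Q i j).re

/-! Every update of the iteration is a perturbation of size `O(1 / β_k)`: the soft threshold
moves each entry by at most `ρ / β_k`, and the shrinkage moves each singular value by at most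
`λ / β_k`, which after conjugation by unitaries (whose entries have norm at most `1`) moves each
entry by at most `m n λ / β_k`. Hence the multipliers `η_{k+1} = -β_k (X_{k+1} - (Y - Z_{k+1} +
η_k / β_k))` stay bounded, so the residual `(η_{k+1} - η_k) / β_k` and the step
`X_{k+1} - X_k` are `O(1 / β_k)`, and `Z_{k+1} - Z_k` is a combination of these.
Since `β_k = μ^k β⁰ → ∞`, all three tend to zero. -/

theorem norm_sub_softQ_le {t : ℝ} (ht : 0 ≤ t) (q : Quat) : ‖q - softQ t q‖ ≤ t := by
  unfold softQ
  split_ifs with hq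
  · simpa [hq] using ht
  have hq : 0 < ‖q‖ := norm_pos_iff.mpr hq
  rw [show ∀ c : ℝ, q - c • q = (1 - c) • q from fun c => by rw [sub_smul, one_smul],
    norm_smul, Real.norm_eq_abs]
  rcases le_total (‖q‖ - t) 0 with hle | hle
  · rw [max_eq_right hle, zero_div, sub_zero, abs_one, one_mul]
    linarith
  · have h : 1 - (‖q‖ - t) / ‖q‖ = t / ‖q‖ := by field_simp; ring
    rw [max_eq_left hle, h, abs_of_nonneg (by positivity), div_mul_cancel₀ _ hq.ne']

theorem abs_Sshrink_sub_le {M : ℕ} {lam alph : ℝ} (hlam : 0 < lam) (halph : 0 < alph)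
    {σ : Fin M → ℝ} (hσ : ∀ i, 0 ≤ σ i) (i : Fin M) :
    |Sshrink lam alph σ i - σ i| ≤ lam := by
  have hσi := hσ i
  simp only [Sshrink, ite_apply]
  set nz := √(∑ j, (if lam < σ j then σ j - lam / 2 else 0) ^ 2)
  set K := 1 + alph * lam / (2 * nz)
  split_ifs with h0 hbig hmid
  · -- every `σ j` exceeding `lam` contributes a positive term to `nz`
    have hsum := le_antisymm (Real.sqrt_eq_zero'.mp h0) (Finset.sum_nonneg fun j _ => sq_nonneg _)
    have hsq := (Finset.sum_eq_zero_iff_of_nonneg fun j _ => sq_nonneg _).mp hsum i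
      (Finset.mem_univ i)
    have hσle : σ i ≤ lam := by
      by_contra! hgt
      rw [if_pos hgt] at hsq
      linarith [pow_eq_zero_iff (n := 2) two_ne_zero |>.mp hsq]
    rw [zero_sub, abs_neg, abs_of_nonneg hσi]
    exact hσle
  · simpa using hlam.le
  · have hK : 0 < K - 1 := by
      have : 0 < nz := lt_of_le_of_ne (Real.sqrt_nonneg _) (Ne.symm h0)
      simp only [K, add_sub_cancel_left]
      positivity
    have hle : σ i * (2 * (K - 1)) ≤ K * lam :=
      (le_div_iff₀ (by positivity)).mp (not_lt.mp hbig)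
    rw [abs_le]
    constructor <;> nlinarith
  · rw [zero_sub, abs_neg, abs_of_nonneg hσi]
    exact not_lt.mp hmid

theorem Matrix.norm_mul_apply_le {α l m n : Type*} [NonUnitalSeminormedRing α] [Fintype m]
    {A : Matrix l m α} {B : Matrix m n α} {a b : ℝ} (hA : ∀ i k, ‖A i k‖ ≤ a)
    (hB : ∀ k j, ‖B k j‖ ≤ b) (i : l) (j : n) :
    ‖(A * B) i j‖ ≤ Fintype.card m * (a * b) :=
  calc ‖(A * B) i j‖ ≤ ∑ k, ‖A i k * B k j‖ := norm_sum_le _ _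
    _ ≤ ∑ _k : m, a * b := Finset.sum_le_sum fun k _ =>
        (norm_mul_le _ _).trans <|
          mul_le_mul (hA i k) (hB k j) (norm_nonneg _) ((norm_nonneg _).trans (hA i k))
    _ = Fintype.card m * (a * b) := by simp

theorem IsQUnitary.norm_apply_le_one {k : ℕ} {U : Matrix (Fin k) (Fin k) Quat}
    (hU : IsQUnitary U) (i j : Fin k) : ‖U i j‖ ≤ 1 := by
  -- the real part of `(Uᴴ * U) j j = 1` is the squared norm of the `j`-th column
  have hcol : ∑ a, ‖U a j‖ ^ 2 = 1 := by
    have h := congrFun (congrFun hU.1 j) j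
    simp only [Matrix.mul_apply, Matrix.conjTranspose_apply, Matrix.one_apply_eq,
      Quaternion.star_mul_self, ← Quaternion.algebraMap_def, ← map_sum,
      ← map_one (algebraMap ℝ Quat)] at h
    simpa [Quaternion.normSq_eq_norm_mul_self, sq] using Quaternion.algebraMap_injective h
  have hi : ‖U i j‖ ^ 2 ≤ 1 :=
    hcol ▸ Finset.single_le_sum (f := fun a => ‖U a j‖ ^ 2) (fun a _ => sq_nonneg _)
      (Finset.mem_univ i)
  exact (sq_le_one_iff₀ (norm_nonneg _)).mp hi

theorem norm_Dmat_apply_le {m n : ℕ} {s : Fin (min m n) → ℝ} {c : ℝ} (hc : 0 ≤ c)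
    (hs : ∀ l, |s l| ≤ c) (i : Fin m) (j : Fin n) : ‖Dmat s i j‖ ≤ c := by
  unfold Dmat
  split_ifs
  · rw [Quaternion.norm_coe, Real.norm_eq_abs]
    exact hs _
  · simpa using hc

theorem Dmat_sub {m n : ℕ} (s t : Fin (min m n) → ℝ) :
    Dmat (m := m) (n := n) (s - t) = Dmat s - Dmat t := by
  ext i j : 1
  simp only [Dmat, Matrix.sub_apply, Pi.sub_apply]
  split_ifs <;> simp

theorem norm_mul_Dmat_mul_conjTranspose_apply_le {m n : ℕ} {U : Matrix (Fin m) (Fin m) Quat}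
    {V : Matrix (Fin n) (Fin n) Quat} (hU : IsQUnitary U) (hV : IsQUnitary V)
    {s : Fin (min m n) → ℝ} {c : ℝ} (hc : 0 ≤ c) (hs : ∀ l, |s l| ≤ c)
    (i : Fin m) (j : Fin n) : ‖(U * Dmat s * Vᴴ) i j‖ ≤ m * n * c := by
  have hUD := Matrix.norm_mul_apply_le hU.norm_apply_le_one (norm_Dmat_apply_le hc hs)
  have hVH : ∀ k l, ‖Vᴴ k l‖ ≤ 1 := fun k l => by
    rw [Matrix.conjTranspose_apply, norm_star]
    exact hV.norm_apply_le_one l k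
  exact (Matrix.norm_mul_apply_le hUD hVH i j).trans_eq (by simp only [Fintype.card_fin]; ring)

theorem norm_shrink_sub_apply_le {m n : ℕ} {U : Matrix (Fin m) (Fin m) Quat}
    {V : Matrix (Fin n) (Fin n) Quat} (hU : IsQUnitary U) (hV : IsQUnitary V)
    {lam alph : ℝ} (hlam : 0 < lam) (halph : 0 < alph)
    {σ : Fin (min m n) → ℝ} (hσ : ∀ l, 0 ≤ σ l) (i : Fin m) (j : Fin n) :
    ‖(U * Dmat (Sshrink lam alph σ) * Vᴴ - U * Dmat σ * Vᴴ) i j‖ ≤ m * n * lam := by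
  rw [← Matrix.sub_mul, ← Matrix.mul_sub, ← Dmat_sub]
  exact norm_mul_Dmat_mul_conjTranspose_apply_le hU hV hlam.le
    (abs_Sshrink_sub_le hlam halph hσ) i j

theorem norm_apply_le_frob {m n : ℕ} (A : Matrix (Fin m) (Fin n) Quat) (i : Fin m) (j : Fin n) :
    ‖A i j‖ ≤ frob A := by
  refine Real.le_sqrt_of_sq_le ?_
  calc ‖A i j‖ ^ 2 ≤ ∑ j', ‖A i j'‖ ^ 2 :=
        Finset.single_le_sum (f := fun j' => ‖A i j'‖ ^ 2) (fun _ _ => sq_nonneg _)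
          (Finset.mem_univ j)
    _ ≤ ∑ i', ∑ j', ‖A i' j'‖ ^ 2 :=
        Finset.single_le_sum (f := fun i' => ∑ j', ‖A i' j'‖ ^ 2)
          (fun _ _ => Finset.sum_nonneg fun _ _ => sq_nonneg _) (Finset.mem_univ i)

theorem continuous_frob {m n : ℕ} : Continuous (frob (m := m) (n := n)) := by
  unfold frob
  fun_prop

theorem tendsto_frob_zero_iff {m n : ℕ} {A : ℕ → Matrix (Fin m) (Fin n) Quat} :
    Tendsto (fun k => frob (A k)) atTop (nhds 0) ↔
      ∀ i j, Tendsto (fun k => A k i j) atTop (nhds 0) := by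
  constructor
  · intro h i j
    exact squeeze_zero_norm (fun k => norm_apply_le_frob (A k) i j) h
  · intro h
    have hA : Tendsto A atTop (nhds 0) := tendsto_pi_nhds.mpr fun i => tendsto_pi_nhds.mpr (h i)
    have h0 : frob (0 : Matrix (Fin m) (Fin n) Quat) = 0 := by simp [frob]
    exact h0 ▸ (continuous_frob.tendsto 0).comp hA

theorem tendsto_zero_of_norm_le_div {E : Type*} [SeminormedAddGroup E] {x : ℕ → E}
    {β : ℕ → ℝ} (hβ : Tendsto β atTop atTop) (C : ℝ)
    (hx : ∀ᶠ k in atTop, ‖x k‖ ≤ C / β k) :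
    Tendsto x atTop (nhds 0) :=
  squeeze_zero_norm' hx (tendsto_const_nhds.div_atTop hβ)

section AdmmStep

variable {m n : ℕ} {Y X Z η X' Z' η' : Matrix (Fin m) (Fin n) Quat} {β : ℝ}

theorem norm_sub_apply_le_of_admm_step {a b : ℝ}
    (hX' : ∀ i j, ‖(X' - (Y - Z' + β⁻¹ • η)) i j‖ ≤ a)
    (hZ' : ∀ i j, ‖((Y - X + β⁻¹ • η) - Z') i j‖ ≤ b) (i : Fin m) (j : Fin n) :
    ‖(X' - X) i j‖ ≤ a + b := by
  have hsplit : (X' - X) i j =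
      (X' - (Y - Z' + β⁻¹ • η)) i j + ((Y - X + β⁻¹ • η) - Z') i j := by
    simp only [Matrix.sub_apply, Matrix.add_apply]
    abel
  rw [hsplit]
  exact (norm_add_le _ _).trans (add_le_add (hX' i j) (hZ' i j))

theorem norm_multiplier_apply_le {c : ℝ} (hβ : 0 < β) (hη' : η' = η + β • (Y - X' - Z'))
    (hX' : ∀ i j, ‖(X' - (Y - Z' + β⁻¹ • η)) i j‖ ≤ c / β) (i : Fin m) (j : Fin n) :
    ‖η' i j‖ ≤ c := by
  have h : η' = -(β • (X' - (Y - Z' + β⁻¹ • η))) := by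
    simp only [hη', smul_sub, smul_add, smul_inv_smul₀ hβ.ne']
    abel
  rw [h, Matrix.neg_apply, Matrix.smul_apply, norm_neg, norm_smul, Real.norm_of_nonneg hβ.le,
    ← le_div_iff₀' hβ]
  exact hX' i j

theorem residual_eq_of_admm_step (hβ : β ≠ 0) (hη' : η' = η + β • (Y - X' - Z')) :
    Y - X' - Z' = β⁻¹ • (η' - η) := by
  rw [hη', add_sub_cancel_left, inv_smul_smul₀ hβ]

theorem norm_residual_apply_le {c : ℝ} (hβ : 0 < β) (hη' : η' = η + β • (Y - X' - Z'))
    {i : Fin m} {j : Fin n} (hη'_le : ‖η' i j‖ ≤ c) (hη_le : ‖η i j‖ ≤ c) :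
    ‖(Y - X' - Z') i j‖ ≤ 2 * c / β := by
  rw [residual_eq_of_admm_step hβ.ne' hη', Matrix.smul_apply, norm_smul, norm_inv,
    Real.norm_of_nonneg hβ.le, inv_mul_eq_div, Matrix.sub_apply]
  gcongr
  linarith [norm_sub_le (η' i j) (η i j)]

end AdmmStep

theorem qnmf_admm_rpca_convergence (m n : ℕ)
    (Y : Matrix (Fin m) (Fin n) Quat)
    (rho lam alph bet0 mu : ℝ)
    (hrho : 0 < rho) (hlam : 0 < lam) (halph : 0 < alph)
    (hbet0 : 0 < bet0) (hmu : 1 < mu)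
    (bet : ℕ → ℝ) (hbet : ∀ k, bet k = mu ^ k * bet0)
    (X Z η : ℕ → Matrix (Fin m) (Fin n) Quat)
    (hZ : ∀ k, ∀ i j,
        Z (k + 1) i j = softQ (rho / bet k) ((Y - X k + (bet k)⁻¹ • η k) i j))
    (hX : ∀ k, ∃ (U : Matrix (Fin m) (Fin m) Quat) (V : Matrix (Fin n) (Fin n) Quat)
        (σ : Fin (min m n) → ℝ),
        IsQUnitary U ∧ IsQUnitary V ∧ Antitone σ ∧ (∀ i, 0 ≤ σ i) ∧
        Y - Z (k + 1) + (bet k)⁻¹ • η k = U * Dmat σ * Vᴴ ∧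
        X (k + 1) = U * Dmat (Sshrink (lam / bet k) alph σ) * Vᴴ)
    (hη : ∀ k, η (k + 1) = η k + bet k • (Y - X (k + 1) - Z (k + 1))) :
    Tendsto (fun k => frob (X (k + 1) - X k)) atTop (nhds 0) ∧
    Tendsto (fun k => frob (Z (k + 1) - Z k)) atTop (nhds 0) ∧
    Tendsto (fun k => frob (Y - X (k + 1) - Z (k + 1))) atTop (nhds 0) := by
  have hbet_pos (k : ℕ) : 0 < bet k := hbet k ▸ by positivity
  have hbet_tendsto : Tendsto bet atTop atTop :=
    ((tendsto_pow_atTop_atTop_of_one_lt hmu).atTop_mul_const hbet0).congr fun k => (hbet k).symm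
  have hXstep (k : ℕ) (i : Fin m) (j : Fin n) :
      ‖(X (k + 1) - (Y - Z (k + 1) + (bet k)⁻¹ • η k)) i j‖ ≤ m * n * lam / bet k := by
    obtain ⟨U, V, σ, hU, hV, -, hσ, hA, hXk⟩ := hX k
    rw [hA, hXk, mul_div_assoc]
    exact norm_shrink_sub_apply_le hU hV (div_pos hlam (hbet_pos k)) halph hσ i j
  have hZstep (k : ℕ) (i : Fin m) (j : Fin n) :
      ‖((Y - X k + (bet k)⁻¹ • η k) - Z (k + 1)) i j‖ ≤ rho / bet k := by
    rw [Matrix.sub_apply, hZ]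
    exact norm_sub_softQ_le (div_nonneg hrho.le (hbet_pos k).le) _
  have hη_le (k : ℕ) : ∀ i j, ‖η (k + 1) i j‖ ≤ m * n * lam :=
    norm_multiplier_apply_le (hbet_pos k) (hη k) (hXstep k)
  have hXdiff (i : Fin m) (j : Fin n) : Tendsto (fun k => (X (k + 1) - X k) i j) atTop (nhds 0) :=
    tendsto_zero_of_norm_le_div hbet_tendsto (m * n * lam + rho) <| .of_forall fun k =>
      (norm_sub_apply_le_of_admm_step (hXstep k) (hZstep k) i j).trans_eq (add_div _ _ _).symm
  have hres (i : Fin m) (j : Fin n) :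
      Tendsto (fun k => (Y - X (k + 1) - Z (k + 1)) i j) atTop (nhds 0) := by
    refine tendsto_zero_of_norm_le_div hbet_tendsto (2 * (m * n * lam)) ?_
    filter_upwards [eventually_ge_atTop 1] with k hk
    obtain ⟨l, rfl⟩ := Nat.exists_eq_add_of_le' hk
    exact norm_residual_apply_le (hbet_pos _) (hη _) (hη_le _ i j) (hη_le l i j)
  -- `Z (k+1) - Z k` is the difference of two consecutive residuals minus `X (k+1) - X k`
  have hZdiff (i : Fin m) (j : Fin n) :
      Tendsto (fun k => (Z (k + 1) - Z k) i j) atTop (nhds 0) := by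
    have hres' := (tendsto_add_atTop_iff_nat (f := fun k => (Y - X k - Z k) i j) 1).mp
      (hres i j)
    simpa using ((hres'.sub (hres i j)).sub (hXdiff i j)).congr fun k => by
      simp only [Matrix.sub_apply]; abel
  simp only [tendsto_frob_zero_iff]
  exact ⟨hXdiff, hZdiff, hres⟩
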